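/- arXiv:2211.07721 — 10 statements merged into one kernel-verified Lean document; each statement's English description precedes it below -/
import Mathlib

section
/- Convex maps of posets are stable under pullback: if g : Q → V is a convex map of posets and f : P → V is any monotone map, then the projection π_P : P ×_V Q → P from the pullback poset to P is convex. -/
section Defs

variable {α β : Type*}

/-- `f` is monotone from the relation `r` to the relation `s`. -/
def Mono (r : α → α → Prop) (s : β → β → Prop) (f : α → β) : Prop :=
  ∀ a b, r a b → s (f a) (f b)

/-- A monotone map `f` is convex if whenever `f x ≤ w ≤ f y` there is a unique
`p` with `x ≤ p ≤ y` and `f p = w`. -/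
def ConvexMap (r : α → α → Prop) (s : β → β → Prop) (f : α → β) : Prop :=
  Mono r s f ∧ ∀ x y w, s (f x) w → s w (f y) → ∃! p, r x p ∧ r p y ∧ f p = w

/-- A subset `S` is connected (w.r.t. the order relation `r`) if any two of its
elements are joined by a finite zigzag of comparable pairs lying in `S`. -/
def ConnectedIn (r : α → α → Prop) (S : Set α) : Prop :=
  ∀ x ∈ S, ∀ y ∈ S,
    Relation.ReflTransGen (fun a b => a ∈ S ∧ b ∈ S ∧ (r a b ∨ r b a)) x y

/-- A subset `S` is order-convex w.r.t. `r`. -/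
def OrdConvexIn (r : α → α → Prop) (S : Set α) : Prop :=
  ∀ x ∈ S, ∀ y ∈ S, ∀ z, r x z → r z y → z ∈ S

/-- The strict relation associated to `r`. -/
def LtRel (r : α → α → Prop) (a b : α) : Prop := r a b ∧ ¬ r b a

/-- `b` covers `a` w.r.t. `r`. -/
def CovRel (r : α → α → Prop) (a b : α) : Prop :=
  LtRel r a b ∧ ∀ c, ¬ (LtRel r a c ∧ LtRel r c b)

/-- A contraction: a monotone surjection with connected convex fibres that lifts covers. -/
def IsContraction (r : α → α → Prop) (s : β → β → Prop) (f : α → β) : Prop :=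
  Mono r s f ∧ Function.Surjective f ∧
  (∀ q, ConnectedIn r (f ⁻¹' {q}) ∧ OrdConvexIn r (f ⁻¹' {q})) ∧
  ∀ q q', CovRel s q q' → ∃ p p', CovRel r p p' ∧ f p = q ∧ f p' = q'

/-- A collapse map: a monotone surjection which partially reflects the strict order. -/
def IsCollapse (r : α → α → Prop) (s : β → β → Prop) (f : α → β) : Prop :=
  Mono r s f ∧ Function.Surjective f ∧ ∀ x y, LtRel s (f x) (f y) → LtRel r x y

/-- `r` is a partial order relation. -/
def IsPartialOrderRel (r : α → α → Prop) : Prop :=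
  (∀ a, r a a) ∧ (∀ a b c, r a b → r b c → r a c) ∧ (∀ a b, r a b → r b a → a = b)

/-- `r` is a preorder relation. -/
def IsPreorderRel (r : α → α → Prop) : Prop :=
  (∀ a, r a a) ∧ ∀ a b c, r a b → r b c → r a c

/-- The symmetrization `x ∼ y` of a preorder relation. -/
def Sim (r : α → α → Prop) (x y : α) : Prop := r x y ∧ r y x

/-- The quotient preorder `T/T'`: the transitive closure of
`x R y ⟺ (x ≤_T y or y ≤_{T'} x)`. -/
def QuotRel (r r' : α → α → Prop) : α → α → Prop :=
  Relation.TransGen (fun x y => r x y ∨ r' y x)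

/-- The identity-on-objects monotone map of preorders `T' → T` is admissible. -/
def Admissible (r' r : α → α → Prop) : Prop :=
  (∀ x y, r' x y → r x y) ∧
  (∀ Y : Set α, ConnectedIn r' Y → ∀ x ∈ Y, ∀ y ∈ Y, (r x y ↔ r' x y)) ∧
  (∀ x y, Sim (QuotRel r r') x y ↔ Sim (QuotRel r' r') x y)

/-- The identity-on-objects monotone map of preorders `T → V` is a contraction of preorders. -/
def PreContraction (r v : α → α → Prop) : Prop :=
  (∀ x y, r x y → v x y) ∧
  (∀ x, ConnectedIn r {y | Sim v x y}) ∧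
  ∀ a a', CovRel v a a' → ∃ t t', CovRel r t t' ∧ t = a ∧ t' = a'

/-- The setoid on `α` whose relation is the symmetrization of the preorder relation `r`. -/
def simSetoid (r : α → α → Prop) (h : IsPreorderRel r) : Setoid α where
  r := Sim r
  iseqv := ⟨fun x => ⟨h.1 x, h.1 x⟩, fun hxy => ⟨hxy.2, hxy.1⟩,
    fun h1 h2 => ⟨h.2 _ _ _ h1.1 h2.1, h.2 _ _ _ h2.2 h1.2⟩⟩

/-- The partial order relation on the posetification (antisymmetrization) of a preorder. -/
def posetLe (r : α → α → Prop) (h : IsPreorderRel r) :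
    Quotient (simSetoid r h) → Quotient (simSetoid r h) → Prop :=
  Quotient.lift₂ r (fun _ _ _ _ hx hy => propext
    ⟨fun hr => h.2 _ _ _ (h.2 _ _ _ hx.2 hr) hy.1,
     fun hr => h.2 _ _ _ (h.2 _ _ _ hx.1 hr) hy.2⟩)

/-- A tree: a poset with a greatest element in which every interval is linearly ordered. -/
def IsTreeRel (r : α → α → Prop) : Prop :=
  (∃ t, ∀ p, r p t) ∧
  ∀ p p' z w, r p z → r z p' → r p w → r w p' → (r z w ∨ r w z)

/-- The connected component of `p` w.r.t. the order relation `r`. -/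
def component (r : α → α → Prop) (p : α) : Set α :=
  {q | Relation.ReflTransGen (fun a b => r a b ∨ r b a) p q}

/-- A forest: a poset each of whose connected components is a tree. -/
def IsForestRel (r : α → α → Prop) : Prop :=
  ∀ p, IsTreeRel (fun a b : component r p => r a.1 b.1)

end Defs

/-- Convex maps of posets are stable under pullback. -/
theorem convexMap_stable_under_pullback
    {P Q V : Type*} [PartialOrder P] [PartialOrder Q] [PartialOrder V]
    (f : P → V) (g : Q → V)
    (hf : Mono (fun a b : P => a ≤ b) (fun a b : V => a ≤ b) f)
    (hg : ConvexMap (fun a b : Q => a ≤ b) (fun a b : V => a ≤ b) g) :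
    ConvexMap (fun a b : {x : P × Q // f x.1 = g x.2} => a.1 ≤ b.1)
      (fun a b : P => a ≤ b) (fun x => x.1.1) := by
  constructor
  · exact fun a b h => h.1
  · rintro ⟨⟨x1, x2⟩, hx⟩ ⟨⟨y1, y2⟩, hy⟩ w hw1 hw2
    simp only at hw1 hw2 hx hy ⊢
    obtain ⟨q, ⟨hq1, hq2, hq3⟩, huniq⟩ :=
      hg.2 x2 y2 (f w) (hx ▸ hf _ _ hw1) (hy ▸ hf _ _ hw2)
    refine ⟨⟨(w, q), hq3.symm⟩, ⟨⟨hw1, hq1⟩, ⟨hw2, hq2⟩, rfl⟩, ?_⟩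
    rintro ⟨⟨p1, p2⟩, hp⟩ ⟨⟨h1, h2⟩, ⟨h3, h4⟩, h5⟩
    simp only at h1 h2 h3 h4 h5 hp ⊢
    subst h5
    have := huniq p2 ⟨h2, h4, by rw [← hp]⟩
    subst this
    rfl
end

section
/- Contractions of posets are stable under pullback along convex maps: if f : P → V is a contraction of posets and g : Q → V is a convex map, then the projection π_Q : P ×_V Q → Q from the pullback poset to Q is a contraction. -/
private lemma cov_mid {γ : Type*} [PartialOrder γ] {a b : γ}
    (h : CovRel (fun x y : γ => x ≤ y) a b) {c : γ} (h1 : a ≤ c) (h2 : c ≤ b) :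
    c = a ∨ c = b := by
  by_contra hc
  push_neg at hc
  exact h.2 c ⟨⟨h1, fun h' => hc.1 (le_antisymm h' h1)⟩,
    ⟨h2, fun h' => hc.2 (le_antisymm h2 h')⟩⟩

/-- Contractions of posets are stable under pullback along convex maps. -/
theorem contraction_stable_under_pullback_along_convex
    {P Q V : Type*} [PartialOrder P] [PartialOrder Q] [PartialOrder V]
    (f : P → V) (g : Q → V)
    (hf : IsContraction (fun a b : P => a ≤ b) (fun a b : V => a ≤ b) f)
    (hg : ConvexMap (fun a b : Q => a ≤ b) (fun a b : V => a ≤ b) g) :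
    IsContraction (fun a b : {x : P × Q // f x.1 = g x.2} => a.1 ≤ b.1)
      (fun a b : Q => a ≤ b) (fun x => x.1.2) := by
  obtain ⟨hfm, hfs, hfib, hcov⟩ := hf
  obtain ⟨hgm, hgc⟩ := hg
  refine ⟨fun a b hab => hab.2, ?_, ?_, ?_⟩
  · intro q
    obtain ⟨p, hp⟩ := hfs (g q)
    exact ⟨⟨(p, q), hp⟩, rfl⟩
  · intro q
    constructor
    · -- connected fibres
      have key : ∀ (a b : P),
          Relation.ReflTransGen
            (fun a b => a ∈ f ⁻¹' {g q} ∧ b ∈ f ⁻¹' {g q} ∧ (a ≤ b ∨ b ≤ a)) a b →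
          ∀ (ha : f a = g q) (hb : f b = g q),
          Relation.ReflTransGen
            (fun x y : {x : P × Q // f x.1 = g x.2} =>
              x ∈ (fun x : {x : P × Q // f x.1 = g x.2} => x.1.2) ⁻¹' {q} ∧
              y ∈ (fun x : {x : P × Q // f x.1 = g x.2} => x.1.2) ⁻¹' {q} ∧
              (x.1 ≤ y.1 ∨ y.1 ≤ x.1))
            ⟨(a, q), ha⟩ ⟨(b, q), hb⟩ := by
        intro a b hab
        induction hab with
        | refl => intro ha hb; exact Relation.ReflTransGen.refl
        | tail h step ih =>
          intro ha hb
          refine Relation.ReflTransGen.tail (ih ha step.1) ?_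
          refine ⟨rfl, rfl, ?_⟩
          rcases step.2.2 with h' | h'
          · exact Or.inl ⟨h', le_refl q⟩
          · exact Or.inr ⟨h', le_refl q⟩
      rintro ⟨⟨p, q1⟩, hpq⟩ hmem ⟨⟨p', q2⟩, hpq'⟩ hmem'
      simp only [Set.mem_preimage, Set.mem_singleton_iff] at hmem hmem'
      subst q1; subst q2
      exact key p p' ((hfib (g q)).1 p hpq p' hpq') hpq hpq'
    · -- convex fibres
      rintro x hx y hy z hxz hzy
      simp only [Set.mem_preimage, Set.mem_singleton_iff] at hx hy ⊢
      have h1 : q ≤ z.1.2 := hx ▸ hxz.2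
      have h2 : z.1.2 ≤ q := hy ▸ hzy.2
      exact le_antisymm h2 h1
  · -- cover lifting
    intro q q' hqq'
    have hlt : q < q' := lt_iff_le_not_ge.mpr hqq'.1
    by_cases hg0 : g q = g q'
    · obtain ⟨p, hp⟩ := hfs (g q)
      refine ⟨⟨(p, q), hp⟩, ⟨(p, q'), by rw [hp, hg0]⟩, ⟨⟨⟨le_refl p, hlt.le⟩, ?_⟩, ?_⟩, rfl, rfl⟩
      · rintro ⟨-, h2⟩
        exact hlt.not_ge h2
      · rintro c ⟨⟨h1, h2⟩, ⟨h3, h4⟩⟩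
        rcases cov_mid hqq' h1.2 h3.2 with h | h
        · exact h2 (Prod.le_def.mpr ⟨h3.1, h.le⟩)
        · exact h4 (Prod.le_def.mpr ⟨h1.1, h.ge⟩)
    · have hgle : g q ≤ g q' := hgm q q' hlt.le
      have hcovV : CovRel (fun a b : V => a ≤ b) (g q) (g q') := by
        refine ⟨⟨hgle, fun h => hg0 (le_antisymm hgle h)⟩, ?_⟩
        rintro w ⟨⟨hw1, hw2⟩, ⟨hw3, hw4⟩⟩
        obtain ⟨q'', ⟨hq1, hq2, hq3⟩, -⟩ := hgc q q' w hw1 hw3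
        rcases cov_mid hqq' hq1 hq2 with h | h
        · exact hw2 (hq3 ▸ h ▸ le_refl _)
        · exact hw4 (hq3 ▸ h ▸ le_refl _)
      obtain ⟨p, p', hpp', hp, hp'⟩ := hcov (g q) (g q') hcovV
      refine ⟨⟨(p, q), hp⟩, ⟨(p', q'), hp'⟩, ⟨⟨⟨hpp'.1.1, hlt.le⟩, ?_⟩, ?_⟩, rfl, rfl⟩
      · rintro ⟨hba, -⟩
        exact hpp'.1.2 hba
      · rintro c ⟨⟨h1, h2⟩, ⟨h3, h4⟩⟩
        have hcq : c.1.2 = q ∨ c.1.2 = q' := cov_mid hqq' h1.2 h3.2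
        have hcp : c.1.1 = p ∨ c.1.1 = p' := cov_mid hpp' h1.1 h3.1
        rcases hcp with hcp | hcp <;> rcases hcq with hcq | hcq
        · exact h2 ⟨hcp.le, hcq.le⟩
        · exact hg0 (by rw [← hp, ← hcp, c.2, hcq])
        · exact hg0 (by rw [← hcq, ← c.2, hcp, hp'])
        · exact h4 ⟨hcp.ge, hcq.ge⟩
end

section
/- Let f : P → Q be a contraction between finite connected posets, and for each q ∈ Q let W_q be a finite connected poset and h_q : f⁻¹(q) → W_q a contraction (where the fibre f⁻¹(q) carries the order induced from P). Then there is a unique partial order on the set W := Σ_{q∈Q} W_q such that: (i) the map h : P → W sending p (with f(p) = q) to (q, h_q(p)) is a contraction; (ii) the map g : W → Q, (q, w) ↦ q, is a contraction; (iii) g ∘ h = f; and (iv) for each q ∈ Q the inclusion W_q → W, w ↦ (q, w), is a convex order-embedding. Moreover, with this order W is connected. -/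
/-- The conditions required of the glued partial order `le` on `W = Σ q, W q`. -/
def GlueContractionProp {P Q : Type*} [PartialOrder P] [PartialOrder Q]
    (f : P → Q) (W : Q → Type*) [∀ q, PartialOrder (W q)]
    (hmap : ∀ q, {p : P // f p = q} → W q)
    (le : ((q : Q) × W q) → ((q : Q) × W q) → Prop) : Prop :=
  IsPartialOrderRel le ∧
  -- (i) `h : P → W`, `p ↦ (f p, h_{f p} p)` is a contraction
  IsContraction (fun a b : P => a ≤ b) le
    (fun p => ⟨f p, hmap (f p) ⟨p, rfl⟩⟩) ∧
  -- (ii) `g : W → Q`, `(q, w) ↦ q` is a contraction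
  IsContraction le (fun a b : Q => a ≤ b) (fun w => w.1) ∧
  -- (iii) `g ∘ h = f`
  (∀ p : P, (show (q : Q) × W q from ⟨f p, hmap (f p) ⟨p, rfl⟩⟩).1 = f p) ∧
  -- (iv) each inclusion `W q → W` is a convex order-embedding
  ∀ q : Q, ConvexMap (fun a b : W q => a ≤ b) le
      (fun w => (⟨q, w⟩ : (q : Q) × W q)) ∧
    ∀ w w' : W q, le ⟨q, w⟩ ⟨q, w'⟩ ↔ w ≤ w'

/-!
The glued order is forced: it must contain the image under `h` of the order of `P`, and
conversely every cover of `W` is the image of a cover of `P`, so by finiteness the glued order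
is the reflexive-transitive closure of the image of `≤` under `h`. That this closure is a partial
order restricting to `W q` on each fibre follows because its steps increase the `Q`-coordinate,
and within a fibre they are images of comparable pairs of the fibre of `f`. The cover conditions
come from one observation: if a monotone map sends the ends of a chain to a cover, some single
step of the chain is sent onto that cover.
-/

open Relation

section Relations

variable {α β : Type*} {r : α → α → Prop} {s : β → β → Prop}

theorem isPartialOrderRel_le {γ : Type*} [PartialOrder γ] :
    IsPartialOrderRel (fun a b : γ => a ≤ b) :=
  ⟨le_refl, fun _ _ _ => le_trans, fun _ _ => le_antisymm⟩

theorem IsPartialOrderRel.of_reflTransGen (hr : IsPartialOrderRel r) {a b : α}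
    (h : ReflTransGen r a b) : r a b := by
  induction h with
  | refl => exact hr.1 a
  | tail _ hbc ih => exact hr.2.1 _ _ _ ih hbc

abbrev IsPartialOrderRel.toPartialOrder (hr : IsPartialOrderRel r) : PartialOrder α where
  le := r
  lt := LtRel r
  le_refl := hr.1
  le_trans := hr.2.1
  le_antisymm := hr.2.2
  lt_iff_le_not_ge _ _ := Iff.rfl

theorem IsPartialOrderRel.reflTransGen_covRel [Finite α] (hr : IsPartialOrderRel r) {a b : α}
    (h : r a b) : ReflTransGen (CovRel r) a b := by
  classical
  let _ := hr.toPartialOrder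
  have : Fintype α := Fintype.ofFinite α
  let _ := Fintype.toLocallyFiniteOrder (α := α)
  have hle : a ≤ b := h
  exact ReflTransGen.mono (fun _ _ hcov => ⟨hcov.1, fun c hc => hcov.2 hc.1 hc.2⟩)
    _ _ (le_iff_reflTransGen_covBy.mp hle)

theorem exists_step_map_eq_of_covRel (hs : IsPartialOrderRel s) {g : α → β} (hg : Mono r s g)
    {a b : α} (hab : ReflTransGen r a b) (hcov : CovRel s (g a) (g b)) :
    ∃ c c', r c c' ∧ g c = g a ∧ g c' = g b := by
  induction hab using ReflTransGen.head_induction_on with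
  | refl => exact absurd hcov.1.1 hcov.1.2
  | @head a c hac hcb ih =>
    by_cases hca : g c = g a
    · obtain ⟨d, d', hdd', hd, hd'⟩ := ih (hca ▸ hcov)
      exact ⟨d, d', hdd', hd.trans hca, hd'⟩
    · have hgac : s (g a) (g c) := hg a c hac
      have hgcb : s (g c) (g b) := hs.of_reflTransGen (hcb.lift g hg)
      have hlt : LtRel s (g a) (g c) := ⟨hgac, fun h => hca (hs.2.2 _ _ h hgac)⟩
      have hcb' : g c = g b := by
        by_contra hne
        exact hcov.2 (g c) ⟨hlt, hgcb, fun h => hne (hs.2.2 _ _ hgcb h)⟩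
      exact ⟨a, c, hac, rfl, hcb'⟩

theorem ConnectedIn.of_mapsTo_surjOn {S : Set α} {T : Set β} {g : α → β}
    (hS : ConnectedIn r S) (hg : Mono r s g) (hmaps : Set.MapsTo g S T) (hsurj : Set.SurjOn g S T) :
    ConnectedIn s T := by
  intro x hx y hy
  obtain ⟨a, ha, rfl⟩ := hsurj hx
  obtain ⟨b, hb, rfl⟩ := hsurj hy
  refine (hS a ha b hb).lift g fun u v ⟨hu, hv, huv⟩ => ⟨hmaps hu, hmaps hv, ?_⟩
  exact huv.imp (hg u v) (hg v u)

theorem IsContraction.monotone {γ δ : Type*} [Preorder γ] [Preorder δ] {g : γ → δ}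
    (hg : IsContraction (fun a b : γ => a ≤ b) (fun a b : δ => a ≤ b) g) : Monotone g :=
  fun a b => hg.1 a b

end Relations

section Glue

variable {P Q : Type*} (f : P → Q) (W : Q → Type*) (hmap : ∀ q, {p : P // f p = q} → W q)

def glueMap (p : P) : (q : Q) × W q := ⟨f p, hmap (f p) ⟨p, rfl⟩⟩

def glueLE [PartialOrder P] : ((q : Q) × W q) → ((q : Q) × W q) → Prop :=
  ReflTransGen (Relation.Map (fun a b : P => a ≤ b) (glueMap f W hmap) (glueMap f W hmap))

variable {f W hmap}

theorem glueMap_eq_mk_iff {p : P} {q : Q} {w : W q} :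
    glueMap f W hmap p = ⟨q, w⟩ ↔ ∃ e : f p = q, hmap q ⟨p, e⟩ = w := by
  constructor
  · intro h
    obtain rfl : f p = q := congrArg Sigma.fst h
    exact ⟨rfl, eq_of_heq (Sigma.mk.inj h).2⟩
  · rintro ⟨rfl, rfl⟩
    rfl

variable [PartialOrder P]

theorem glueMap_le_glueMap {p p' : P} (h : p ≤ p') :
    glueLE f W hmap (glueMap f W hmap p) (glueMap f W hmap p') :=
  ReflTransGen.single ⟨p, p', h, rfl, rfl⟩

theorem eq_glueLE_of_isContraction [Finite ((q : Q) × W q)]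
    {le : ((q : Q) × W q) → ((q : Q) × W q) → Prop} (hle : IsPartialOrderRel le)
    (hh : IsContraction (fun a b : P => a ≤ b) le (glueMap f W hmap)) :
    le = glueLE f W hmap := by
  funext x y
  apply propext
  constructor
  · intro hxy
    refine ReflTransGen.mono (fun u v huv => ?_) _ _ (hle.reflTransGen_covRel hxy)
    obtain ⟨p, p', hpp', rfl, rfl⟩ := hh.2.2.2 u v huv
    exact ⟨p, p', hpp'.1.1, rfl, rfl⟩
  · intro hxy
    refine hle.of_reflTransGen (ReflTransGen.mono ?_ _ _ hxy)
    rintro _ _ ⟨p, p', hpp', rfl, rfl⟩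
    exact hh.1 p p' hpp'

variable [PartialOrder Q]

theorem glueLE.fst_le (hf : Monotone f) {x y : (q : Q) × W q} (h : glueLE f W hmap x y) :
    x.1 ≤ y.1 := by
  induction h with
  | refl => exact le_rfl
  | tail _ hstep ih =>
    obtain ⟨p, p', hpp', rfl, rfl⟩ := hstep
    exact ih.trans (hf hpp')

variable [∀ q, PartialOrder (W q)]

theorem glueLE.le_of_mk (hf : Monotone f) (hmono : ∀ q, Monotone (hmap q)) {q : Q}
    {a b : W q} (h : glueLE f W hmap ⟨q, a⟩ ⟨q, b⟩) : a ≤ b := by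
  suffices ∀ x, glueLE f W hmap x ⟨q, b⟩ → ∀ a, x = ⟨q, a⟩ → a ≤ b from
    this _ h a rfl
  intro x hx
  induction hx using ReflTransGen.head_induction_on with
  | refl => rintro a ⟨⟩; exact le_rfl
  | @head x c hxc hcb ih =>
    rintro a rfl
    obtain ⟨p, p', hpp', hp, rfl⟩ := hxc
    obtain ⟨e, rfl⟩ := glueMap_eq_mk_iff.mp hp
    have e' : f p' = q := le_antisymm (glueLE.fst_le hf hcb) (e ▸ hf hpp')
    exact (hmono q (show (⟨p, e⟩ : {p // f p = q}) ≤ ⟨p', e'⟩ from hpp')).trans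
      (ih _ (glueMap_eq_mk_iff.mpr ⟨e', rfl⟩))

theorem isPartialOrderRel_glueLE (hf : Monotone f) (hmono : ∀ q, Monotone (hmap q)) :
    IsPartialOrderRel (glueLE f W hmap) := by
  refine ⟨fun _ => ReflTransGen.refl, fun _ _ _ => ReflTransGen.trans, ?_⟩
  rintro ⟨q, a⟩ ⟨q', b⟩ hab hba
  obtain rfl : q = q' := le_antisymm (glueLE.fst_le hf hab) (glueLE.fst_le hf hba)
  rw [le_antisymm (glueLE.le_of_mk hf hmono hab) (glueLE.le_of_mk hf hmono hba)]

theorem isContraction_glueMap [Finite P] (hf : Monotone f)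
    (hcontr : ∀ q, IsContraction (fun a b : {p : P // f p = q} => a.1 ≤ b.1)
      (fun a b : W q => a ≤ b) (hmap q)) :
    IsContraction (fun a b : P => a ≤ b) (glueLE f W hmap) (glueMap f W hmap) := by
  have hmono : ∀ q, Monotone (hmap q) := fun q => (hcontr q).monotone
  refine ⟨fun _ _ => glueMap_le_glueMap, fun ⟨q, w⟩ => ?_, fun ⟨q, w⟩ => ⟨?_, ?_⟩,
    fun x y hxy => ?_⟩
  · obtain ⟨⟨p, e⟩, hp⟩ := (hcontr q).2.1 w
    exact ⟨p, glueMap_eq_mk_iff.mpr ⟨e, hp⟩⟩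
  · refine ((hcontr q).2.2.1 w).1.of_mapsTo_surjOn (fun _ _ h => h)
      (fun t ht => glueMap_eq_mk_iff.mpr ⟨t.2, ht⟩) fun p hp => ?_
    obtain ⟨e, he⟩ := glueMap_eq_mk_iff.mp hp
    exact ⟨⟨p, e⟩, he, rfl⟩
  · intro p hp p' hp' z hpz hzp'
    obtain ⟨e, rfl⟩ := glueMap_eq_mk_iff.mp hp
    obtain ⟨e', he'⟩ := glueMap_eq_mk_iff.mp hp'
    have ez : f z = q := le_antisymm (e' ▸ hf hzp') (e ▸ hf hpz)
    refine glueMap_eq_mk_iff.mpr ⟨ez, le_antisymm ?_ ?_⟩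
    · exact he' ▸ hmono q (show (⟨z, ez⟩ : {p // f p = q}) ≤ ⟨p', e'⟩ from hzp')
    · exact hmono q (show (⟨p, e⟩ : {p // f p = q}) ≤ ⟨z, ez⟩ from hpz)
  · -- A cover of `glueLE` is one generating step `h p ≤ h p'`; split `p ≤ p'` into covers.
    have hL := isPartialOrderRel_glueLE hf hmono
    obtain ⟨_, _, ⟨p, p', hpp', rfl, rfl⟩, rfl, rfl⟩ :=
      exists_step_map_eq_of_covRel hL (g := id) (fun _ _ => ReflTransGen.single) hxy.1.1 hxy
    exact exists_step_map_eq_of_covRel hL (fun _ _ h => glueMap_le_glueMap h.1.1)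
      (isPartialOrderRel_le.reflTransGen_covRel hpp') hxy

theorem isContraction_sigmaFst [Finite ((q : Q) × W q)]
    (hf : IsContraction (fun a b : P => a ≤ b) (fun a b : Q => a ≤ b) f)
    (hcontr : ∀ q, IsContraction (fun a b : {p : P // f p = q} => a.1 ≤ b.1)
      (fun a b : W q => a ≤ b) (hmap q)) :
    IsContraction (glueLE f W hmap) (fun a b : Q => a ≤ b) Sigma.fst := by
  have hfm := hf.monotone
  have hL := isPartialOrderRel_glueLE hfm fun q => (hcontr q).monotone
  refine ⟨fun _ _ => glueLE.fst_le hfm, fun q => ?_, fun q => ⟨?_, ?_⟩,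
    fun q q' hqq' => ?_⟩
  · obtain ⟨p, rfl⟩ := hf.2.1 q
    exact ⟨glueMap f W hmap p, rfl⟩
  · refine (hf.2.2.1 q).1.of_mapsTo_surjOn (fun _ _ => glueMap_le_glueMap) (fun _ hp => hp) ?_
    rintro ⟨_, w⟩ rfl
    obtain ⟨⟨p, e⟩, rfl⟩ := (hcontr _).2.1 w
    exact ⟨p, e, glueMap_eq_mk_iff.mpr ⟨e, rfl⟩⟩
  · intro x hx y hy z hxz hzy
    exact le_antisymm (hy ▸ glueLE.fst_le hfm hzy) (hx ▸ glueLE.fst_le hfm hxz)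
  · obtain ⟨p, p', hpp', rfl, rfl⟩ := hf.2.2.2 q q' hqq'
    exact exists_step_map_eq_of_covRel isPartialOrderRel_le
      (fun _ _ h => glueLE.fst_le hfm h.1.1)
      (hL.reflTransGen_covRel (glueMap_le_glueMap hpp'.1.1)) hqq'

theorem glueLE_mk_mk_iff (hf : Monotone f)
    (hcontr : ∀ q, IsContraction (fun a b : {p : P // f p = q} => a.1 ≤ b.1)
      (fun a b : W q => a ≤ b) (hmap q)) {q : Q} [Finite (W q)] {a b : W q} :
    glueLE f W hmap ⟨q, a⟩ ⟨q, b⟩ ↔ a ≤ b := by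
  refine ⟨glueLE.le_of_mk hf fun q => (hcontr q).monotone, fun hab => ?_⟩
  refine ReflTransGen.lift' (Sigma.mk q) (fun u v huv => ?_) _ _
    (isPartialOrderRel_le.reflTransGen_covRel hab)
  obtain ⟨t, t', htt', rfl, rfl⟩ := (hcontr q).2.2.2 u v huv
  exact ReflTransGen.single ⟨t.1, t'.1, htt'.1.1, glueMap_eq_mk_iff.mpr ⟨t.2, rfl⟩,
    glueMap_eq_mk_iff.mpr ⟨t'.2, rfl⟩⟩

theorem convexMap_sigmaMk (hf : Monotone f)
    (hcontr : ∀ q, IsContraction (fun a b : {p : P // f p = q} => a.1 ≤ b.1)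
      (fun a b : W q => a ≤ b) (hmap q)) (q : Q) [Finite (W q)] :
    ConvexMap (fun a b : W q => a ≤ b) (glueLE f W hmap) (Sigma.mk q) := by
  refine ⟨fun _ _ => (glueLE_mk_mk_iff hf hcontr).mpr, ?_⟩
  rintro a b ⟨q', w⟩ haw hwb
  obtain rfl : q' = q := le_antisymm (glueLE.fst_le hf hwb) (glueLE.fst_le hf haw)
  exact ⟨w, ⟨(glueLE_mk_mk_iff hf hcontr).mp haw, (glueLE_mk_mk_iff hf hcontr).mp hwb, rfl⟩,
    fun _ hw => sigma_mk_injective hw.2.2⟩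

end Glue

theorem glue_contractions_unique_order_general
    {P Q : Type*} [PartialOrder P] [PartialOrder Q] [Fintype P]
    (hPconn : ConnectedIn (fun a b : P => a ≤ b) Set.univ)
    (f : P → Q)
    (hf : IsContraction (fun a b : P => a ≤ b) (fun a b : Q => a ≤ b) f)
    (W : Q → Type*) [∀ q, PartialOrder (W q)]
    (hmap : ∀ q, {p : P // f p = q} → W q)
    (hcontr : ∀ q, IsContraction (fun a b : {p : P // f p = q} => a.1 ≤ b.1)
      (fun a b : W q => a ≤ b) (hmap q)) :
    (∃! le : ((q : Q) × W q) → ((q : Q) × W q) → Prop,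
        GlueContractionProp f W hmap le) ∧
    ∀ le : ((q : Q) × W q) → ((q : Q) × W q) → Prop,
      GlueContractionProp f W hmap le → ConnectedIn le Set.univ := by
  have hfm := hf.monotone
  have : Finite Q := Finite.of_surjective f hf.2.1
  have : ∀ q, Finite (W q) := fun q => Finite.of_surjective _ (hcontr q).2.1
  have hglue : GlueContractionProp f W hmap (glueLE f W hmap) :=
    ⟨isPartialOrderRel_glueLE hfm fun q => (hcontr q).monotone,
      isContraction_glueMap hfm hcontr, isContraction_sigmaFst hf hcontr, fun _ => rfl,
      fun q => ⟨convexMap_sigmaMk hfm hcontr q, fun _ _ => glueLE_mk_mk_iff hfm hcontr⟩⟩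
  refine ⟨⟨_, hglue, fun le hle => eq_glueLE_of_isContraction hle.1 hle.2.1⟩,
    fun le hle => ?_⟩
  exact hPconn.of_mapsTo_surjOn hle.2.1.1 (Set.mapsTo_univ _ _)
    (Set.surjOn_univ.mpr hle.2.1.2.1)

/-- gluing contractions over the fibres of a contraction of finite
connected posets: existence and uniqueness of the partial order on `Σ q, W q`,
and connectedness of the result. -/
theorem glue_contractions_unique_order
    {P Q : Type*} [PartialOrder P] [PartialOrder Q] [Fintype P] [Fintype Q]
    (hPconn : ConnectedIn (fun a b : P => a ≤ b) Set.univ)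
    (hQconn : ConnectedIn (fun a b : Q => a ≤ b) Set.univ)
    (f : P → Q)
    (hf : IsContraction (fun a b : P => a ≤ b) (fun a b : Q => a ≤ b) f)
    (W : Q → Type*) [∀ q, PartialOrder (W q)] [∀ q, Fintype (W q)]
    (hWconn : ∀ q, ConnectedIn (fun a b : W q => a ≤ b) Set.univ)
    (hmap : ∀ q, {p : P // f p = q} → W q)
    (hcontr : ∀ q, IsContraction (fun a b : {p : P // f p = q} => a.1 ≤ b.1)
      (fun a b : W q => a ≤ b) (hmap q)) :
    (∃! le : ((q : Q) × W q) → ((q : Q) × W q) → Prop,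
        GlueContractionProp f W hmap le) ∧
    ∀ le : ((q : Q) × W q) → ((q : Q) × W q) → Prop,
      GlueContractionProp f W hmap le → ConnectedIn le Set.univ :=
  glue_contractions_unique_order_general hPconn f hf W hmap hcontr
end

section
/- Let f : P → Q be a contraction between finite posets. If P is a tree, then Q is a tree. -/
/-!
For `z`, `w` above a common `q` in `Q` it suffices to lift `q ≤ z` and `q ≤ w` to inequalities
`x ≤ xz`, `x ≤ xw` in `P` starting at one and the same `x ∈ f⁻¹(q)`: the tree `P` makes `xz`
and `xw` comparable, and `f` carries this back to `z`, `w`. By finiteness it is enough to lift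
covers `q ⋖ q'`. One lift `a ≤ a'` is given by the contraction, and it is transported along a
zigzag in the connected fibre `f⁻¹(q)`: in a tree two elements above a common point are
comparable, and the lift can never fall back into the fibre of `q` since `q < q'`.
-/

theorem IsTreeRel.comparable_of_le_of_le {α : Type*} {r : α → α → Prop} (h : IsTreeRel r)
    {x z w : α} (hz : r x z) (hw : r x w) : r z w ∨ r w z :=
  let ⟨⟨t, ht⟩, hint⟩ := h
  hint x t z w hz (ht z) hw (ht w)

theorem covRel_iff_covBy {α : Type*} [Preorder α] {a b : α} :
    CovRel (· ≤ ·) a b ↔ a ⋖ b := by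
  simp only [CovRel, LtRel, ← lt_iff_le_not_ge, CovBy, not_and]

section Lifting

variable {P Q : Type*} [Preorder P] {f : P → Q}

theorem exists_le_map_eq_of_connectedIn_preimage [Preorder Q] (hf : Monotone f)
    (hP : ∀ x z w : P, x ≤ z → x ≤ w → z ≤ w ∨ w ≤ z) {q q' : Q} (hqq' : q < q')
    (hconn : ConnectedIn (· ≤ ·) (f ⁻¹' {q})) {a a' : P} (ha : f a = q) (haa' : a ≤ a')
    (ha' : f a' = q') {x : P} (hx : f x = q) : ∃ x', x ≤ x' ∧ f x' = q' := by
  have hzigzag := hconn a ha x hx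
  clear hx
  induction hzigzag with
  | refl => exact ⟨a', haa', ha'⟩
  | tail _ hstep ih =>
    obtain ⟨x', hyx', hx'⟩ := ih
    obtain ⟨-, hy₂ : f _ = q, hle | hge⟩ := hstep
    · refine (hP _ _ _ hle hyx').elim (fun h => ⟨x', h, hx'⟩) fun h => ?_
      exact absurd (hx' ▸ hy₂ ▸ hf h) hqq'.not_ge
    · exact ⟨x', hge.trans hyx', hx'⟩

theorem exists_le_map_eq_of_le [PartialOrder Q] [LocallyFiniteOrder Q]
    (hcov : ∀ q q' : Q, q ⋖ q' → ∀ x, f x = q → ∃ x', x ≤ x' ∧ f x' = q')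
    {q w : Q} (hqw : q ≤ w) {x : P} (hx : f x = q) : ∃ x', x ≤ x' ∧ f x' = w := by
  have hchain := le_iff_reflTransGen_covBy.mp hqw
  clear hqw
  induction hchain with
  | refl => exact ⟨x, le_rfl, hx⟩
  | tail _ hcovBy ih =>
    obtain ⟨x₁, hxx₁, hx₁⟩ := ih
    obtain ⟨x', hx₁x', hx'⟩ := hcov _ _ hcovBy x₁ hx₁
    exact ⟨x', hxx₁.trans hx₁x', hx'⟩

theorem IsTreeRel.of_surjective_of_exists_le_map_eq [Preorder Q]
    (hP : IsTreeRel (α := P) (· ≤ ·)) (hf : Monotone f) (hsurj : Function.Surjective f)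
    (hlift : ∀ q w : Q, q ≤ w → ∀ x, f x = q → ∃ x', x ≤ x' ∧ f x' = w) :
    IsTreeRel (α := Q) (· ≤ ·) := by
  obtain ⟨t, ht⟩ := hP.1
  refine ⟨⟨f t, fun q => ?_⟩, fun q _ z w hqz _ hqw _ => ?_⟩
  · obtain ⟨x, rfl⟩ := hsurj q
    exact hf (ht x)
  · obtain ⟨x, hx⟩ := hsurj q
    obtain ⟨xz, hxz, rfl⟩ := hlift q z hqz x hx
    obtain ⟨xw, hxw, rfl⟩ := hlift q w hqw x hx
    exact (hP.comparable_of_le_of_le hxz hxw).imp (fun h => hf h) fun h => hf h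

end Lifting

theorem contraction_of_tree_is_tree_general {P Q : Type*} [PartialOrder P] [PartialOrder Q]
    [Fintype Q]
    (f : P → Q)
    (hf : IsContraction (fun a b : P => a ≤ b) (fun a b : Q => a ≤ b) f)
    (hP : IsTreeRel (fun a b : P => a ≤ b)) :
    IsTreeRel (fun a b : Q => a ≤ b) := by
  obtain ⟨hmono, hsurj, hfibre, hcov⟩ := hf
  have hf : Monotone f := fun a b => hmono a b
  have hliftCovBy : ∀ q q' : Q, q ⋖ q' → ∀ x, f x = q → ∃ x', x ≤ x' ∧ f x' = q' := by
    intro q q' hqq' x hx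
    obtain ⟨a, a', haa', ha, ha'⟩ := hcov q q' (covRel_iff_covBy.mpr hqq')
    exact exists_le_map_eq_of_connectedIn_preimage hf (fun _ _ _ => hP.comparable_of_le_of_le)
      hqq'.lt (hfibre q).1 ha haa'.1.1 ha' hx
  classical
  have : LocallyFiniteOrder Q := Fintype.toLocallyFiniteOrder
  exact hP.of_surjective_of_exists_le_map_eq hf hsurj fun _ _ hqw _ =>
    exists_le_map_eq_of_le hliftCovBy hqw

/-- the target of a contraction of finite posets whose source is a
tree is a tree. -/
theorem contraction_of_tree_is_tree {P Q : Type*} [PartialOrder P] [PartialOrder Q]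
    [Fintype P] [Fintype Q]
    (f : P → Q)
    (hf : IsContraction (fun a b : P => a ≤ b) (fun a b : Q => a ≤ b) f)
    (hP : IsTreeRel (fun a b : P => a ≤ b)) :
    IsTreeRel (fun a b : Q => a ≤ b) :=
  contraction_of_tree_is_tree_general f hf hP
end

section
/- Let f : P → Q be a contraction between finite posets. If P is a forest, then Q is a forest. -/
/-!
In a forest every up-set `{z | p ≤ z}` is a chain: it lies in the component of `p` and below the
top of that component. Hence a finite connected subset of a forest has a greatest element; in
particular every fibre of a contraction `f` does, and the map `g` sending `q` to the top of its
fibre is a section of `f`. Lifting a cover `a ⋖ b` to `p ⋖ p'`, the elements `g a` and `p'` lie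
above `p`, so they are comparable, and `p' ≤ g a` would give `b ≤ a`; thus `g a ≤ p' ≤ g b` and
`g` is monotone. Finally a retract `Q` of a forest `P` (monotone `f`, `g` with `f ∘ g = id`) is a
forest: `g` carries up-sets and components of `Q` into those of `P`, and `f` carries them back.
-/

section

variable {α P Q : Type*}

lemma covRel_le_iff_covBy [Preorder α] {a b : α} : CovRel (· ≤ ·) a b ↔ a ⋖ b := by
  simp only [CovRel, LtRel, ← lt_iff_le_not_ge, CovBy, not_and]

lemma Monotone.mem_component [Preorder P] [Preorder Q] {f : P → Q} (hf : Monotone f) {p q : P}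
    (h : q ∈ component (· ≤ ·) p) : f q ∈ component (· ≤ ·) (f p) :=
  h.lift f fun _ _ hab => hab.imp (fun h => hf h) (fun h => hf h)

namespace IsForestRel

lemma total_of_rel {r : α → α → Prop} (hr : IsForestRel r) {p z w : α} (hz : r p z)
    (hw : r p w) : r z w ∨ r w z := by
  obtain ⟨⟨t, ht⟩, hchain⟩ := hr p
  have hz' : z ∈ component r p := .single (.inl hz)
  have hw' : w ∈ component r p := .single (.inl hw)
  exact hchain ⟨p, .refl⟩ t ⟨z, hz'⟩ ⟨w, hw'⟩ hz (ht ⟨z, hz'⟩) hw (ht ⟨w, hw'⟩)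

variable [Preorder P]

lemma exists_isGreatest_of_connectedIn (hP : IsForestRel (fun a b : P => a ≤ b)) {S : Set P}
    (hS : ConnectedIn (· ≤ ·) S) (hfin : S.Finite) (hne : S.Nonempty) : ∃ m, IsGreatest S m := by
  obtain ⟨m, hmS, hmax⟩ := hfin.exists_maximal hne
  refine ⟨m, hmS, fun y hy => ?_⟩
  have hzigzag := hS m hmS y hy
  clear hy
  induction hzigzag with
  | refl => exact le_rfl
  | @tail b c _ hbc hbm =>
    obtain ⟨-, hcS, hbc | hcb⟩ := hbc
    · exact (hP.total_of_rel hbc hbm).elim id (hmax hcS)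
    · exact hcb.trans hbm

variable [Preorder Q]

lemma of_leftInverse (hP : IsForestRel (fun a b : P => a ≤ b)) {f : P → Q} {g : Q → P}
    (hf : Monotone f) (hg : Monotone g) (hfg : Function.LeftInverse f g) :
    IsForestRel (fun a b : Q => a ≤ b) := by
  intro q₀
  obtain ⟨⟨⟨t, htc⟩, ht⟩, -⟩ := hP (g q₀)
  have hft : f t ∈ component (· ≤ ·) q₀ := by simpa only [hfg q₀] using hf.mem_component htc
  refine ⟨⟨⟨f t, hft⟩, fun ⟨q, hq⟩ => ?_⟩, fun a _ z w haz _ haw _ => ?_⟩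
  · simpa only [hfg q] using hf (ht ⟨g q, by simpa only using hg.mem_component hq⟩)
  · simpa only [hfg z, hfg w] using (hP.total_of_rel (hg haz) (hg haw)).imp (@hf _ _) (@hf _ _)

end IsForestRel

namespace IsContraction

variable [Preorder P] {f : P → Q}

lemma exists_isGreatest_fibre [Finite P] [Preorder Q]
    (hf : IsContraction (fun a b : P => a ≤ b) (fun a b : Q => a ≤ b) f)
    (hP : IsForestRel (fun a b : P => a ≤ b)) (q : Q) : ∃ m, IsGreatest (f ⁻¹' {q}) m :=
  hP.exists_isGreatest_of_connectedIn (hf.2.2.1 q).1 (Set.toFinite _) (hf.2.1 q)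

lemma le_of_covBy_of_isGreatest [Preorder Q]
    (hf : IsContraction (fun a b : P => a ≤ b) (fun a b : Q => a ≤ b) f)
    (hP : IsForestRel (fun a b : P => a ≤ b)) {a b : Q} (hab : a ⋖ b) {ma mb : P}
    (ha : IsGreatest (f ⁻¹' {a}) ma) (hb : IsGreatest (f ⁻¹' {b}) mb) : ma ≤ mb := by
  obtain ⟨p, p', hpp', rfl, rfl⟩ := hf.2.2.2 a b (covRel_le_iff_covBy.mpr hab)
  have hma : f ma = f p := ha.1
  have hp'a : ¬ p' ≤ ma := fun h => hab.lt.not_ge (hma ▸ hf.1 _ _ h)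
  have hmap' : ma ≤ p' :=
    (hP.total_of_rel (ha.2 rfl) (covRel_le_iff_covBy.mp hpp').le).resolve_right hp'a
  exact hmap'.trans (hb.2 rfl)

lemma monotone_of_isGreatest_fibre [PartialOrder Q] [Finite Q]
    (hf : IsContraction (fun a b : P => a ≤ b) (fun a b : Q => a ≤ b) f)
    (hP : IsForestRel (fun a b : P => a ≤ b)) {g : Q → P}
    (hg : ∀ q, IsGreatest (f ⁻¹' {q}) (g q)) : Monotone g := by
  have := Fintype.ofFinite Q
  classical
  let := Fintype.toLocallyFiniteOrder (α := Q)
  exact (monotone_iff_forall_covBy g).mpr fun a b hab =>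
    hf.le_of_covBy_of_isGreatest hP hab (hg a) (hg b)

end IsContraction

end

/-- the target of a contraction of finite posets whose source is a
forest is a forest. -/
theorem contraction_of_forest_is_forest {P Q : Type*} [PartialOrder P] [PartialOrder Q]
    [Fintype P] [Fintype Q]
    (f : P → Q)
    (hf : IsContraction (fun a b : P => a ≤ b) (fun a b : Q => a ≤ b) f)
    (hP : IsForestRel (fun a b : P => a ≤ b)) :
    IsForestRel (fun a b : Q => a ≤ b) := by
  choose g hg using hf.exists_isGreatest_fibre hP
  exact hP.of_leftInverse (fun a b h => hf.1 a b h) (hf.monotone_of_isGreatest_fibre hP hg)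
    fun q => (hg q).1
end

section
/- Admissible maps of preorders are stable under pullback along identity-on-objects monotone maps: let ≤_{V'}, ≤_V, ≤_T be preorders on a set X with the identity-on-objects map V' → V admissible and ≤_T ⊆ ≤_V. Let ≤_W be the preorder on X defined by x ≤_W y ⟺ (x ≤_{V'} y and x ≤_T y) (the pullback V' ×_V T). Then the identity-on-objects map W → T is admissible. -/
/-!
Write `W` for the pullback `V' ×_V T`. A `W`-connected set is `V'`-connected, so on it `≤_T ⊆ ≤_V`
agrees with `≤_{V'}`, and hence with `≤_W`. For the quotients: the points of a cycle through `x`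
in `T/W` are equivalent to `x` in `T/W`, hence in `V/V'`, hence in `V'/V'`; they therefore all lie
in the `V'`-component of `x`, where every `T`-step is a `W`-step, so the cycle is a cycle in `W/W`.
-/

open Relation

section Relations

variable {α : Type*}

theorem connectedIn_mono {r s : α → α → Prop} (hrs : ∀ a b, r a b → s a b) {S : Set α}
    (hS : ConnectedIn r S) : ConnectedIn s S := fun x hx y hy =>
  ReflTransGen.mono (fun _ _ ⟨ha, hb, h⟩ => ⟨ha, hb, h.imp (hrs _ _) (hrs _ _)⟩) _ _
    (hS x hx y hy)

theorem reflTransGen_within_component {r : α → α → Prop} {p q : α} (hq : q ∈ component r p) :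
    ReflTransGen (fun a b => a ∈ component r p ∧ b ∈ component r p ∧ (r a b ∨ r b a)) p q := by
  induction hq with
  | refl => exact .refl
  | tail hpb hbc ih => exact ih.tail ⟨hpb, hpb.tail hbc, hbc⟩

theorem connectedIn_component (r : α → α → Prop) (p : α) : ConnectedIn r (component r p) :=
  fun _ hx _ hy =>
    (ReflTransGen.mono (fun _ _ ⟨ha, hb, h⟩ => ⟨hb, ha, h.symm⟩) _ _
      (reflTransGen_swap.mpr (reflTransGen_within_component hx))).trans
      (reflTransGen_within_component hy)

theorem QuotRel.mono {r r' s s' : α → α → Prop} (hr : ∀ a b, r a b → s a b)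
    (hr' : ∀ a b, r' a b → s' a b) {x y : α} (h : QuotRel r r' x y) : QuotRel s s' x y :=
  TransGen.mono (fun a b => Or.imp (hr a b) (hr' b a)) x y h

theorem QuotRel.mem_component {r : α → α → Prop} {x y : α} (h : QuotRel r r x y) :
    y ∈ component r x :=
  h.to_reflTransGen

theorem Relation.TransGen.within_cycle {R : α → α → Prop} {x y : α} (hxy : TransGen R x y)
    (hyx : TransGen R y x) :
    TransGen (fun u v => R u v ∧ (TransGen R x u ∧ TransGen R u x) ∧
      (TransGen R x v ∧ TransGen R v x)) x y := by
  induction hxy with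
  | single h =>
    have hxx : TransGen R x x := (TransGen.single h).trans hyx
    exact .single ⟨h, ⟨hxx, hxx⟩, .single h, hyx⟩
  | @tail b c hxb hbc ih =>
    have hbx : TransGen R b x := hyx.head hbc
    exact (ih hbx).tail ⟨hbc, ⟨hxb, hbx⟩, hxb.tail hbc, hyx⟩

end Relations

section Admissible

variable {α : Type*} {r' r : α → α → Prop}

theorem Admissible.le_of_connectedIn (h : Admissible r' r) {Y : Set α} (hY : ConnectedIn r' Y)
    {x y : α} (hx : x ∈ Y) (hy : y ∈ Y) (hxy : r x y) : r' x y :=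
  (h.2.1 Y hY x hx y hy).1 hxy

theorem Admissible.mem_component_of_sim (h : Admissible r' r) {x z : α}
    (hxz : Sim (QuotRel r r') x z) : z ∈ component r' x :=
  ((h.2.2 x z).1 hxz).1.mem_component

variable {t : α → α → Prop}

theorem Admissible.pullback_le_of_connectedIn (h : Admissible r' r) (htr : ∀ a b, t a b → r a b)
    {Y : Set α} (hY : ConnectedIn (fun a b => r' a b ∧ t a b) Y) {x y : α} (hx : x ∈ Y)
    (hy : y ∈ Y) (hxy : t x y) : r' x y ∧ t x y :=
  ⟨h.le_of_connectedIn (connectedIn_mono (fun _ _ => And.left) hY) hx hy (htr x y hxy), hxy⟩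

theorem Admissible.quotRel_pullback_of_sim (h : Admissible r' r) (htr : ∀ a b, t a b → r a b)
    {x y : α} (hxy : Sim (QuotRel t fun a b => r' a b ∧ t a b) x y) :
    QuotRel (fun a b => r' a b ∧ t a b) (fun a b => r' a b ∧ t a b) x y := by
  have hcomp : ∀ z, Sim (QuotRel t fun a b => r' a b ∧ t a b) x z → z ∈ component r' x :=
    fun z hz => h.mem_component_of_sim
      ⟨hz.1.mono htr (fun _ _ => And.left), hz.2.mono htr (fun _ _ => And.left)⟩
  refine TransGen.mono ?_ x y (hxy.1.within_cycle hxy.2)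
  rintro u v ⟨huv | hvu, hu, hv⟩
  · exact .inl ⟨h.le_of_connectedIn (connectedIn_component r' x) (hcomp u hu) (hcomp v hv)
      (htr u v huv), huv⟩
  · exact .inr hvu

end Admissible

theorem admissible_stable_under_pullback_general {X : Type*} (rV' rV rT : X → X → Prop)
    (hadm : Admissible rV' rV)
    (hsub : ∀ x y, rT x y → rV x y) :
    Admissible (fun x y => rV' x y ∧ rT x y) rT := by
  refine ⟨fun _ _ h => h.2, fun Y hY x hx y hy => ?_, fun x y => ⟨?_, ?_⟩⟩
  · exact ⟨hadm.pullback_le_of_connectedIn hsub hY hx hy, And.right⟩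
  · intro hxy
    exact ⟨hadm.quotRel_pullback_of_sim hsub hxy, hadm.quotRel_pullback_of_sim hsub ⟨hxy.2, hxy.1⟩⟩
  · intro hxy
    exact ⟨hxy.1.mono (fun _ _ => And.right) (fun _ _ => id),
      hxy.2.mono (fun _ _ => And.right) (fun _ _ => id)⟩

/-- admissible maps of preorders are stable under pullback along
identity-on-objects monotone maps. -/
theorem admissible_stable_under_pullback {X : Type*} (rV' rV rT : X → X → Prop)
    (hV' : IsPreorderRel rV') (hV : IsPreorderRel rV) (hT : IsPreorderRel rT)
    (hadm : Admissible rV' rV)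
    (hsub : ∀ x y, rT x y → rV x y) :
    Admissible (fun x y => rV' x y ∧ rT x y) rT :=
  admissible_stable_under_pullback_general rV' rV rT hadm hsub
end

section
/- Let ≤_{T_0} ⊆ ≤_{T_1} ⊆ ≤_{T_2} be preorders on a set X such that the identity-on-objects maps T_0 → T_1 and T_1 → T_2 are admissible. Then ≤_{T_1/T_0} ⊆ ≤_{T_2/T_0}, the identity-on-objects map T_1/T_0 → T_2/T_0 is admissible, and the iterated quotient satisfies (T_2/T_0)/(T_1/T_0) = T_2/T_1 as preorders on X. -/
section AuxProof

open Relation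

variable {X : Type*}

private lemma rtg_symm' {r : X → X → Prop} (hs : ∀ a b, r a b → r b a) {a b : X}
    (h : ReflTransGen r a b) : ReflTransGen r b a := by
  induction h with
  | refl => exact .refl
  | tail _ hbc ih => exact (ReflTransGen.single (hs _ _ hbc)).trans ih

private lemma tg_symm' {r : X → X → Prop} (hs : ∀ a b, r a b → r b a) {a b : X}
    (h : TransGen r a b) : TransGen r b a := by
  induction h with
  | single h => exact .single (hs _ _ h)
  | tail _ hbc ih => exact (TransGen.single (hs _ _ hbc)).trans ih

private lemma tg_rev' {r s : X → X → Prop} (h : ∀ a b, r a b → s b a) {a b : X}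
    (hab : TransGen r a b) : TransGen s b a := by
  induction hab with
  | single h1 => exact .single (h _ _ h1)
  | tail _ hbc ih => exact (TransGen.single (h _ _ hbc)).trans ih

private lemma tg_flatten' {r s : X → X → Prop} (hrs : ∀ a b, r a b → TransGen s a b)
    {a b : X} (h : TransGen r a b) : TransGen s a b := by
  induction h with
  | single h1 => exact hrs _ _ h1
  | tail _ hbc ih => exact ih.trans (hrs _ _ hbc)

private lemma rtg_flatten' {r s : X → X → Prop} (hrs : ∀ a b, r a b → ReflTransGen s a b)
    {a b : X} (h : ReflTransGen r a b) : ReflTransGen s a b := by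
  induction h with
  | refl => exact .refl
  | tail _ hbc ih => exact ih.trans (hrs _ _ hbc)

end AuxProof

/-- for admissible `T₀ → T₁` and `T₁ → T₂`, the induced map
`T₁/T₀ → T₂/T₀` is admissible and `(T₂/T₀)/(T₁/T₀) = T₂/T₁`. -/
theorem quotient_of_admissible_chain {X : Type*} (rT0 rT1 rT2 : X → X → Prop)
    (h0 : IsPreorderRel rT0) (h1 : IsPreorderRel rT1) (h2 : IsPreorderRel rT2)
    (hsub01 : ∀ x y, rT0 x y → rT1 x y) (hsub12 : ∀ x y, rT1 x y → rT2 x y)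
    (hadm01 : Admissible rT0 rT1) (hadm12 : Admissible rT1 rT2) :
    (∀ x y, QuotRel rT1 rT0 x y → QuotRel rT2 rT0 x y) ∧
    Admissible (QuotRel rT1 rT0) (QuotRel rT2 rT0) ∧
    ∀ x y, QuotRel (QuotRel rT2 rT0) (QuotRel rT1 rT0) x y ↔ QuotRel rT2 rT1 x y := by
  classical
  set Q1 := QuotRel rT1 rT0 with hQ1def
  set Q2 := QuotRel rT2 rT0 with hQ2def
  set Q21 := QuotRel rT2 rT1 with hQ21def
  set Conn1 : X → X → Prop :=
    fun x y => Relation.ReflTransGen (fun a b => rT1 a b ∨ rT1 b a) x y with hConn1def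
  -- basic facts
  have hQ12 : ∀ x y, Q1 x y → Q2 x y := by
    intro x y h
    exact tg_flatten' (fun a b hab =>
      Relation.TransGen.single (hab.imp (hsub12 a b) id)) h
  have hConnSymm : ∀ x y, Conn1 x y → Conn1 y x := by
    intro x y h
    exact rtg_symm' (fun a b hab => hab.symm) h
  have hConnTrans : ∀ x y z, Conn1 x y → Conn1 y z → Conn1 x z := by
    intro x y z h1' h2'
    exact Relation.ReflTransGen.trans h1' h2'
  have hQ1Conn : ∀ x y, Q1 x y → Conn1 x y := by
    intro x y h
    exact (tg_flatten' (fun a b hab =>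
      Relation.TransGen.single (hab.imp id (hsub01 b a))) h).to_reflTransGen
  have hConn_Q21 : ∀ x y, Conn1 x y → Q21 x y := by
    intro x y h
    induction h with
    | refl => exact Relation.TransGen.single (Or.inl (h2.1 x))
    | tail _ hbc ih =>
      exact ih.tail (hbc.imp (fun h' => hsub12 _ _ h') (fun h' => h'))
  have hQ2_Q21 : ∀ x y, Q2 x y → Q21 x y := by
    intro x y h
    exact tg_flatten' (fun a b hab =>
      Relation.TransGen.single (hab.imp id (hsub01 b a))) h
  have hSim_Conn : ∀ x y, Sim Q21 x y → Conn1 x y := by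
    intro x y h
    have h' := (hadm12.2.2 x y).mp h
    exact h'.1.to_reflTransGen
  -- restriction: rT2 = rT1 on rT1-connected pairs
  have hRestr : ∀ a b, Conn1 a b → rT2 a b → rT1 a b := by
    intro a b hc h2ab
    set Y : Set X := {q | Conn1 a q} with hYdef
    have hzig : ∀ z, Conn1 a z →
        Relation.ReflTransGen (fun u v => u ∈ Y ∧ v ∈ Y ∧ (rT1 u v ∨ rT1 v u)) a z := by
      intro z hz
      induction hz with
      | refl => exact .refl
      | @tail b' c' hab' hbc ih =>
        exact ih.tail ⟨hab', hab'.tail hbc, hbc⟩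
    have hconn : ConnectedIn rT1 Y := by
      intro u hu v hv
      have hsymm : ∀ p q, (p ∈ Y ∧ q ∈ Y ∧ (rT1 p q ∨ rT1 q p)) →
          (q ∈ Y ∧ p ∈ Y ∧ (rT1 q p ∨ rT1 p q)) :=
        fun p q hpq => ⟨hpq.2.1, hpq.1, hpq.2.2.symm⟩
      exact (rtg_symm' hsymm (hzig u hu)).trans (hzig v hv)
    have ha : a ∈ Y := Relation.ReflTransGen.refl
    exact (hadm12.2.1 Y hconn a ha b hc).mp h2ab
  -- the key lemma
  have hKey : ∀ x y, Conn1 x y → Q2 x y → Q1 x y := by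
    intro x y hcxy hxy
    have hyx21 : Q21 y x := hConn_Q21 y x (hConnSymm _ _ hcxy)
    have main : ∀ z, Q2 x z → (Q21 z y → Q1 x z) := by
      intro z hz
      induction hz with
      | single h =>
        intro hzy
        cases h with
        | inl h2' =>
          have hx_z : Q21 _ _ := Relation.TransGen.single (Or.inl h2')
          have hz_x : Q21 _ x := hzy.trans hyx21
          have hconn : Conn1 x _ := hSim_Conn x _ ⟨hx_z, hz_x⟩
          exact Relation.TransGen.single (Or.inl (hRestr x _ hconn h2'))
        | inr h0' => exact Relation.TransGen.single (Or.inr h0')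
      | @tail b z' hxb hbz ih =>
        intro hzy
        have hbz21 : Q21 b z' := by
          cases hbz with
          | inl h' => exact Relation.TransGen.single (Or.inl h')
          | inr h' => exact Relation.TransGen.single (Or.inr (hsub01 _ _ h'))
        have hby : Q21 b y := hbz21.trans hzy
        have hQ1xb : Q1 x b := ih hby
        cases hbz with
        | inl h2' =>
          have hcxb : Conn1 x b := hQ1Conn x b hQ1xb
          have hx_z : Q21 x z' := (hQ2_Q21 x b hxb).trans hbz21
          have hz_x : Q21 z' x := hzy.trans hyx21
          have hcxz : Conn1 x z' := hSim_Conn x z' ⟨hx_z, hz_x⟩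
          have hcbz : Conn1 b z' := hConnTrans _ _ _ (hConnSymm _ _ hcxb) hcxz
          exact hQ1xb.tail (Or.inl (hRestr b z' hcbz h2'))
        | inr h0' => exact hQ1xb.tail (Or.inr h0')
    exact main y hxy (Relation.TransGen.single (Or.inl (h2.1 y)))
  -- part (c): iterated quotient
  have hquot : ∀ x y, QuotRel Q2 Q1 x y ↔ Q21 x y := by
    intro x y
    constructor
    · intro h
      refine tg_flatten' (fun a b hab => ?_) h
      cases hab with
      | inl h' => exact hQ2_Q21 a b h'
      | inr h' =>
        exact tg_rev' (fun u v huv => huv.elim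
          (fun h'' => Or.inr h'') (fun h'' => Or.inl (hsub12 _ _ (hsub01 _ _ h'')))) h'
    · intro h
      refine tg_flatten' (fun a b hab => ?_) h
      cases hab with
      | inl h' => exact Relation.TransGen.single (Or.inl (Relation.TransGen.single (Or.inl h')))
      | inr h' => exact Relation.TransGen.single (Or.inr (Relation.TransGen.single (Or.inl h')))
  have hQ11 : ∀ x y, QuotRel Q1 Q1 x y ↔ QuotRel rT1 rT1 x y := by
    intro x y
    constructor
    · intro h
      refine tg_flatten' (fun a b hab => ?_) h
      cases hab with
      | inl h' =>
        exact tg_flatten' (fun u v huv => Relation.TransGen.single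
          (huv.imp id (hsub01 v u))) h'
      | inr h' =>
        have : QuotRel rT1 rT1 b a := tg_flatten' (fun u v huv =>
          Relation.TransGen.single (huv.imp id (hsub01 v u))) h'
        exact tg_symm' (fun u v huv => huv.symm) this
    · intro h
      refine tg_flatten' (fun a b hab => ?_) h
      cases hab with
      | inl h' => exact Relation.TransGen.single (Or.inl (Relation.TransGen.single (Or.inl h')))
      | inr h' => exact Relation.TransGen.single (Or.inr (Relation.TransGen.single (Or.inl h')))
  refine ⟨hQ12, ⟨hQ12, ?_, ?_⟩, fun x y => hquot x y⟩
  · -- connected restriction for Q1 ⊆ Q2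
    intro Y hY x hx y hy
    constructor
    · intro h2xy
      have hcxy : Conn1 x y := by
        refine rtg_flatten' (fun a b hab => ?_) (hY x hx y hy)
        cases hab.2.2 with
        | inl h' => exact hQ1Conn a b h'
        | inr h' => exact hConnSymm _ _ (hQ1Conn b a h')
      exact hKey x y hcxy h2xy
    · exact hQ12 x y
  · -- Sim condition
    intro x y
    have e1 : Sim (QuotRel Q2 Q1) x y ↔ Sim Q21 x y := by
      constructor
      · intro h; exact ⟨(hquot x y).mp h.1, (hquot y x).mp h.2⟩
      · intro h; exact ⟨(hquot x y).mpr h.1, (hquot y x).mpr h.2⟩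
    have e2 : Sim (QuotRel Q1 Q1) x y ↔ Sim (QuotRel rT1 rT1) x y := by
      constructor
      · intro h; exact ⟨(hQ11 x y).mp h.1, (hQ11 y x).mp h.2⟩
      · intro h; exact ⟨(hQ11 x y).mpr h.1, (hQ11 y x).mpr h.2⟩
    rw [e1, e2]
    exact hadm12.2.2 x y
end

section
/- Let f : T → V be a contraction of preorders on a set X. Then the induced map on posetifications (antisymmetrizations) [x] ↦ [x], from the posetification of T to the posetification of V, is a well-defined contraction of posets. -/
/-- a contraction of preorders induces a well-defined contraction
of posets between the posetifications. -/
theorem posetification_of_preorder_contraction {X : Type*} (rT rV : X → X → Prop)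
    (hT : IsPreorderRel rT) (hV : IsPreorderRel rV)
    (hc : PreContraction rT rV) :
    ∃ F : Quotient (simSetoid rT hT) → Quotient (simSetoid rV hV),
      (∀ x : X, F (Quotient.mk (simSetoid rT hT) x) = Quotient.mk (simSetoid rV hV) x) ∧
      IsContraction (posetLe rT hT) (posetLe rV hV) F := by
  obtain ⟨hmono, hconn, hcov⟩ := hc
  refine ⟨Quotient.lift (fun x => Quotient.mk (simSetoid rV hV) x)
      (fun x y hxy => Quotient.sound ⟨hmono _ _ hxy.1, hmono _ _ hxy.2⟩), fun _ => rfl, ?_, ?_, ?_, ?_⟩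
  · -- Mono
    intro a b
    induction a using Quotient.ind
    induction b using Quotient.ind
    exact fun h => hmono _ _ h
  · -- Surjective
    intro q
    induction q using Quotient.ind with
    | _ x => exact ⟨Quotient.mk _ x, rfl⟩
  · -- fibres connected and convex
    intro q
    induction q using Quotient.ind with
    | _ a =>
    constructor
    · -- connected
      intro ξ hξ η hη
      induction ξ using Quotient.ind with
      | _ x =>
      induction η using Quotient.ind with
      | _ y =>
      have hx : Sim rV a x := (Quotient.exact (hξ.symm : _))
      have hy : Sim rV a y := (Quotient.exact (hη.symm : _))
      have hxy : Sim rV x y := ⟨hV.2 _ _ _ hx.2 hy.1, hV.2 _ _ _ hy.2 hx.1⟩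
      have hzz : Relation.ReflTransGen
          (fun u v => u ∈ {z | Sim rV x z} ∧ v ∈ {z | Sim rV x z} ∧ (rT u v ∨ rT v u)) x y :=
        hconn x x ⟨hV.1 x, hV.1 x⟩ y hxy
      have key : ∀ z, Sim rV x z →
          (Quotient.mk (simSetoid rT hT) z) ∈
            ((Quotient.lift (fun w => Quotient.mk (simSetoid rV hV) w)
              (fun u v (huv : Sim rT u v) => Quotient.sound ⟨hmono _ _ huv.1, hmono _ _ huv.2⟩)) ⁻¹'
              {Quotient.mk (simSetoid rV hV) a}) := by
        intro z hz
        show Quotient.mk (simSetoid rV hV) z = Quotient.mk (simSetoid rV hV) a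
        exact Quotient.sound ⟨hV.2 _ _ _ hz.2 hx.2, hV.2 _ _ _ hx.1 hz.1⟩
      clear hξ hη hy hxy
      induction hzz with
      | refl => exact Relation.ReflTransGen.refl
      | tail _ hstep ih =>
        refine Relation.ReflTransGen.tail ih ⟨key _ hstep.1, key _ hstep.2.1, ?_⟩
        rcases hstep.2.2 with h | h
        · exact Or.inl h
        · exact Or.inr h
    · -- convex
      intro ξ hξ η hη ζ h1 h2
      induction ξ using Quotient.ind with
      | _ x =>
      induction η using Quotient.ind with
      | _ y =>
      induction ζ using Quotient.ind with
      | _ z =>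
      have hx : Sim rV a x := (Quotient.exact (hξ.symm : _))
      have hy : Sim rV a y := (Quotient.exact (hη.symm : _))
      have hxz : rT x z := h1
      have hzy : rT z y := h2
      have h3 : Sim rV a z := ⟨hV.2 _ _ _ hx.1 (hmono _ _ hxz),
        hV.2 _ _ _ (hmono _ _ hzy) hy.2⟩
      show Quotient.mk (simSetoid rV hV) z = Quotient.mk (simSetoid rV hV) a
      exact Quotient.sound ⟨h3.2, h3.1⟩
  · -- covers
    intro q q' hqq'
    induction q using Quotient.ind with
    | _ a =>
    induction q' using Quotient.ind with
    | _ a' =>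
    have hcv : CovRel rV a a' := by
      refine ⟨⟨hqq'.1.1, hqq'.1.2⟩, fun c hc' => ?_⟩
      exact hqq'.2 (Quotient.mk (simSetoid rV hV) c)
        ⟨⟨hc'.1.1, hc'.1.2⟩, ⟨hc'.2.1, hc'.2.2⟩⟩
    obtain ⟨t, t', hctt, ht, ht'⟩ := hcov a a' hcv
    subst ht ht'
    refine ⟨Quotient.mk (simSetoid rT hT) t, Quotient.mk (simSetoid rT hT) t',
      ⟨⟨hctt.1.1, hctt.1.2⟩, fun c hc' => ?_⟩, rfl, rfl⟩
    induction c using Quotient.ind with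
    | _ c =>
    exact hctt.2 c ⟨⟨hc'.1.1, hc'.1.2⟩, ⟨hc'.2.1, hc'.2.2⟩⟩
end

section
/- For any preorder ≤_T on a set X, let T^inv be the preorder on X defined by x ≤_{T^inv} y ⟺ (x ≤_T y and y ≤_T x). Then the identity-on-objects map T^inv → T is admissible. -/
/-- the identity-on-objects map `T^inv → T` is admissible. -/
theorem inv_part_is_admissible {X : Type*} (rT : X → X → Prop)
    (hT : IsPreorderRel rT) :
    Admissible (fun x y => rT x y ∧ rT y x) rT := by
  refine ⟨fun x y h => h.1, ?_, ?_⟩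
  · intro Y hconn x hx y hy
    have hsim : ∀ a b : X,
        Relation.ReflTransGen (fun a b => a ∈ Y ∧ b ∈ Y ∧
          ((rT a b ∧ rT b a) ∨ (rT b a ∧ rT a b))) a b → rT a b ∧ rT b a := by
      intro a b h
      induction h with
      | refl => exact ⟨hT.1 a, hT.1 a⟩
      | tail _ h2 ih =>
        rcases h2.2.2 with h3 | h3
        · exact ⟨hT.2 _ _ _ ih.1 h3.1, hT.2 _ _ _ h3.2 ih.2⟩
        · exact ⟨hT.2 _ _ _ ih.1 h3.2, hT.2 _ _ _ h3.1 ih.2⟩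
    have hxy := hsim x y (hconn x hx y hy)
    exact ⟨fun _ => hxy, fun h => h.1⟩
  · intro x y
    have key : ∀ a b : X,
        Relation.TransGen (fun x y => rT x y ∨ (rT y x ∧ rT x y)) a b → rT a b := by
      intro a b h
      induction h with
      | single h => rcases h with h | h; exacts [h, h.2]
      | tail _ h2 ih =>
        rcases h2 with h | h
        · exact hT.2 _ _ _ ih h
        · exact hT.2 _ _ _ ih h.2
    have key2 : ∀ a b : X,
        Relation.TransGen (fun x y => (rT x y ∧ rT y x) ∨ (rT y x ∧ rT x y)) a b →
          rT a b ∧ rT b a := by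
      intro a b h
      induction h with
      | single h => rcases h with h | h; exacts [h, ⟨h.2, h.1⟩]
      | tail _ h2 ih =>
        rcases h2 with h | h
        · exact ⟨hT.2 _ _ _ ih.1 h.1, hT.2 _ _ _ h.2 ih.2⟩
        · exact ⟨hT.2 _ _ _ ih.1 h.2, hT.2 _ _ _ h.1 ih.2⟩
    constructor
    · rintro ⟨h1, h2⟩
      have hx : rT x y := key _ _ h1
      have hy : rT y x := key _ _ h2
      exact ⟨Relation.TransGen.single (Or.inl ⟨hx, hy⟩),
        Relation.TransGen.single (Or.inl ⟨hy, hx⟩)⟩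
    · rintro ⟨h1, h2⟩
      have hx := key2 _ _ h1
      exact ⟨Relation.TransGen.single (Or.inl hx.1),
        Relation.TransGen.single (Or.inl hx.2)⟩
end

section
/- Let ≤_{T'} ⊆ ≤_T be preorders on a set X such that the identity-on-objects map T' → T is admissible. Then for every x ∈ X, the map [y]_{∼_{T'}} ↦ [y]_{∼_T} is a well-defined isomorphism of posets from the sub-poset {[y] | y ∼_{T'/T'} x} of the posetification of T' onto the sub-poset {[y] | y ∼_{T/T'} x} of the posetification of T (i.e., the fibre of posetification(T) → posetification(T/T') over the class of x equals the corresponding fibre of posetification(T') → posetification(T'/T')). -/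
/-!
On a class `S` of the quotient `T'/T'` (a connected component of `T'`), admissibility makes
`≤_T` and `≤_{T'}` agree, so `[y]_{T'} ↦ [y]_T` both preserves and reflects the order on the
classes of `S`; reflecting the order forces injectivity by antisymmetry. Since the classes of
`T/T'` and of `T'/T'` coincide, every `T`-class in the target fibre is hit.
-/

section Posetification

variable {α : Type*} {r' r : α → α → Prop} {h' : IsPreorderRel r'} {h : IsPreorderRel r}

theorem posetLe_refl (a : Quotient (simSetoid r h)) : posetLe r h a a :=
  Quotient.inductionOn a h.1

theorem posetLe_antisymm {a b : Quotient (simSetoid r h)} :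
    posetLe r h a b → posetLe r h b a → a = b :=
  Quotient.inductionOn₂ a b fun _ _ hab hba => Quotient.sound ⟨hab, hba⟩

def posetMap (hsub : ∀ x y, r' x y → r x y) :
    Quotient (simSetoid r' h') → Quotient (simSetoid r h) :=
  Quotient.map id fun _ _ hxy => ⟨hsub _ _ hxy.1, hsub _ _ hxy.2⟩

def posetMapOn (hsub : ∀ x y, r' x y → r x y) (P Q : α → Prop) (hPQ : ∀ y, P y → Q y)
    (a : {a : Quotient (simSetoid r' h') // ∃ y, Quotient.mk _ y = a ∧ P y}) :
    {b : Quotient (simSetoid r h) // ∃ y, Quotient.mk _ y = b ∧ Q y} :=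
  ⟨posetMap hsub a.1, a.2.imp fun y ⟨hya, hy⟩ => ⟨hya ▸ rfl, hPQ y hy⟩⟩

variable {hsub : ∀ x y, r' x y → r x y} {P Q : α → Prop} {hPQ : ∀ y, P y → Q y}

theorem posetLe_posetMapOn_iff (hagree : ∀ y, P y → ∀ z, P z → (r y z ↔ r' y z))
    (a b : {a : Quotient (simSetoid r' h') // ∃ y, Quotient.mk _ y = a ∧ P y}) :
    posetLe r' h' a.1 b.1 ↔
      posetLe r h (posetMapOn hsub P Q hPQ a).1 (posetMapOn hsub P Q hPQ b).1 := by
  obtain ⟨_, y, rfl, hy⟩ := a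
  obtain ⟨_, z, rfl, hz⟩ := b
  exact (hagree y hy z hz).symm

theorem posetMapOn_injective (hagree : ∀ y, P y → ∀ z, P z → (r y z ↔ r' y z)) :
    Function.Injective (posetMapOn (h' := h') (h := h) hsub P Q hPQ) := fun a b hab =>
  Subtype.ext <| posetLe_antisymm
    ((posetLe_posetMapOn_iff hagree a b).2 (by rw [hab]; exact posetLe_refl _))
    ((posetLe_posetMapOn_iff hagree b a).2 (by rw [hab]; exact posetLe_refl _))

theorem posetMapOn_surjective (hQP : ∀ y, Q y → P y) :
    Function.Surjective (posetMapOn (h' := h') (h := h) hsub P Q hPQ) := by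
  rintro ⟨_, y, rfl, hy⟩
  exact ⟨⟨Quotient.mk _ y, y, rfl, hQP y hy⟩, rfl⟩

end Posetification

section QuotRel

variable {α : Type*} {r : α → α → Prop}

theorem quotRel_self_symm {a b : α} (hab : QuotRel r r a b) : QuotRel r r b a := by
  induction hab with
  | single hab => exact .single hab.symm
  | tail _ hbc ih => exact .head hbc.symm ih

theorem sim_quotRel_self_iff {a b : α} : Sim (QuotRel r r) a b ↔ QuotRel r r a b :=
  ⟨And.left, fun hab => ⟨hab, quotRel_self_symm hab⟩⟩

/-- Each point of a zigzag from `y` to `x` is itself `T'/T'`-equivalent to `x`. -/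
theorem connectedIn_quotRel_class (x : α) : ConnectedIn r {y | Sim (QuotRel r r) y x} := by
  set S := {y | Sim (QuotRel r r) y x}
  let E : α → α → Prop := fun a b => a ∈ S ∧ b ∈ S ∧ (r a b ∨ r b a)
  have E_symm : ∀ a b, Relation.ReflTransGen E a b → Relation.ReflTransGen E b a := by
    intro a b hab
    induction hab with
    | refl => exact .refl
    | tail _ hbc ih => exact .head ⟨hbc.2.1, hbc.1, hbc.2.2.symm⟩ ih
  have to_x : ∀ y, QuotRel r r y x → Relation.ReflTransGen E y x := by
    intro y hy
    have hx : x ∈ S := sim_quotRel_self_iff.2 ((quotRel_self_symm hy).trans hy)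
    induction hy using Relation.TransGen.head_induction_on with
    | single hyx => exact .single ⟨sim_quotRel_self_iff.2 (.single hyx), hx, hyx⟩
    | head hyw hwx ih =>
      exact .head ⟨sim_quotRel_self_iff.2 (.head hyw hwx), sim_quotRel_self_iff.2 hwx, hyw⟩ ih
  intro y hy z hz
  exact (to_x y hy.1).trans (E_symm _ _ (to_x z hz.1))

end QuotRel

theorem admissible_fibre_posetification_iso_general {X : Type*} (rT' rT : X → X → Prop)
    (hT' : IsPreorderRel rT') (hT : IsPreorderRel rT)
    (hadm : Admissible rT' rT) (x : X) :
    ∃ e : {a : Quotient (simSetoid rT' hT') //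
            ∃ y, Quotient.mk (simSetoid rT' hT') y = a ∧ Sim (QuotRel rT' rT') y x} ≃
          {a : Quotient (simSetoid rT hT) //
            ∃ y, Quotient.mk (simSetoid rT hT) y = a ∧ Sim (QuotRel rT rT') y x},
      (∀ (y : X) (hy : Sim (QuotRel rT' rT') y x),
        (e ⟨Quotient.mk (simSetoid rT' hT') y, y, rfl, hy⟩).1 =
          Quotient.mk (simSetoid rT hT) y) ∧
      ∀ a b, posetLe rT' hT' a.1 b.1 ↔ posetLe rT hT (e a).1 (e b).1 := by
  obtain ⟨hsub, hconn, hquot⟩ := hadm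
  have hagree := hconn _ (connectedIn_quotRel_class x)
  have hPQ : ∀ y, Sim (QuotRel rT' rT') y x → Sim (QuotRel rT rT') y x := fun y => (hquot y x).2
  have hf : Function.Bijective (posetMapOn (h' := hT') (h := hT) hsub _ _ hPQ) :=
    ⟨posetMapOn_injective hagree, posetMapOn_surjective fun y => (hquot y x).1⟩
  exact ⟨.ofBijective _ hf, fun _ _ => rfl, posetLe_posetMapOn_iff (hPQ := hPQ) hagree⟩

/-- for an admissible map `T' → T` and `x ∈ X`, the map
`[y]_{T'} ↦ [y]_T` is a well-defined isomorphism of posets from the fibre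
`{[y] | y ∼_{T'/T'} x}` of the posetification of `T'` onto the fibre
`{[y] | y ∼_{T/T'} x}` of the posetification of `T`. -/
theorem admissible_fibre_posetification_iso {X : Type*} (rT' rT : X → X → Prop)
    (hT' : IsPreorderRel rT') (hT : IsPreorderRel rT)
    (hsub : ∀ x y, rT' x y → rT x y)
    (hadm : Admissible rT' rT) (x : X) :
    ∃ e : {a : Quotient (simSetoid rT' hT') //
            ∃ y, Quotient.mk (simSetoid rT' hT') y = a ∧ Sim (QuotRel rT' rT') y x} ≃
          {a : Quotient (simSetoid rT hT) //
            ∃ y, Quotient.mk (simSetoid rT hT) y = a ∧ Sim (QuotRel rT rT') y x},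
      (∀ (y : X) (hy : Sim (QuotRel rT' rT') y x),
        (e ⟨Quotient.mk (simSetoid rT' hT') y, y, rfl, hy⟩).1 =
          Quotient.mk (simSetoid rT hT) y) ∧
      ∀ a b, posetLe rT' hT' a.1 b.1 ↔ posetLe rT hT (e a).1 (e b).1 :=
  admissible_fibre_posetification_iso_general rT' rT hT' hT hadm x
end
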